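/- Let q be a positive integer, c_1, ..., c_{q+1} complex numbers, and b_1, ..., b_q ∈ (0, 2π) distinct real numbers. Then c_1·exp(i n b_1) + c_2·exp(i n b_2) + ⋯ + c_q·exp(i n b_q) → c_{q+1} as n → ∞ over positive integers n if and only if c_1 = c_2 = ⋯ = c_{q+1} = 0. -/

import Mathlib

open Filter Finset Complex Topology

/-- average of powers of a unimodular `z ≠ 1` tends to 0. -/
lemma avg_pow_tendsto_zero {z : ℂ} (hz : ‖z‖ = 1) (hz1 : z ≠ 1) :
    Tendsto (fun N : ℕ => (N : ℂ)⁻¹ * ∑ n ∈ Finset.range N, z ^ n) atTop (𝓝 0) := by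
  have hbd : ∀ N : ℕ, ‖∑ n ∈ Finset.range N, z ^ n‖ ≤ 2 / ‖z - 1‖ := by
    intro N
    rw [geom_sum_eq hz1, norm_div]
    gcongr
    calc ‖z ^ N - 1‖ ≤ ‖z ^ N‖ + ‖(1 : ℂ)‖ := norm_sub_le _ _
      _ = 2 := by simp [norm_pow, hz]; norm_num
  have h0 : Tendsto (fun N : ℕ => (N : ℝ)⁻¹ * (2 / ‖z - 1‖)) atTop (𝓝 0) := by
    simpa using ((tendsto_inv_atTop_nhds_zero_nat (𝕜 := ℝ)).mul_const (2 / ‖z - 1‖))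
  refine squeeze_zero_norm (fun N => ?_) h0
  rw [norm_mul, norm_inv, Complex.norm_natCast]
  gcongr
  exact hbd N

/-- average of a null sequence times a bounded sequence tends to 0. -/
lemma avg_null_tendsto_zero {u w : ℕ → ℂ} (hu : Tendsto u atTop (𝓝 0))
    (hw : ∀ n, ‖w n‖ ≤ 1) :
    Tendsto (fun N : ℕ => (N : ℂ)⁻¹ * ∑ n ∈ Finset.range N, u n * w n) atTop (𝓝 0) := by
  have h := (hu.norm).cesaro
  simp only [norm_zero] at h
  refine squeeze_zero_norm (fun N => ?_) h
  rw [norm_mul, norm_inv, Complex.norm_natCast]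
  gcongr
  calc ‖∑ n ∈ Finset.range N, u n * w n‖ ≤ ∑ n ∈ Finset.range N, ‖u n * w n‖ :=
        norm_sum_le _ _
    _ ≤ ∑ n ∈ Finset.range N, ‖u n‖ := by
        apply Finset.sum_le_sum
        intro n _
        rw [norm_mul]
        calc ‖u n‖ * ‖w n‖ ≤ ‖u n‖ * 1 := by gcongr; exact hw n
          _ = ‖u n‖ := mul_one _

lemma exp_I_ne_one {θ : ℝ} (h1 : -(2 * Real.pi) < θ) (h2 : θ < 2 * Real.pi) (h0 : θ ≠ 0) :
    Complex.exp (Complex.I * θ) ≠ 1 := by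
  intro heq
  rw [Complex.exp_eq_one_iff] at heq
  obtain ⟨n, hn⟩ := heq
  have him := congrArg Complex.im hn
  simp [Complex.mul_im, Complex.I_re, Complex.I_im] at him
  -- him : θ = n * (2 * π) (in some form)
  have hpi := Real.pi_pos
  have hθ : θ = (n : ℝ) * (2 * Real.pi) := by
    have := congrArg Complex.im hn
    simpa [Complex.mul_im, Complex.I_re, Complex.I_im] using this
  have hn1 : (n : ℝ) < 1 := by nlinarith
  have hn2 : (-1 : ℝ) < (n : ℝ) := by nlinarith
  have hz1 : n < 1 := by exact_mod_cast hn1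
  have hz2 : -1 < n := by exact_mod_cast hn2
  have : n = 0 := by omega
  subst this
  simp at hθ
  exact h0 hθ

lemma avg_one_tendsto_one :
    Tendsto (fun N : ℕ => (N : ℂ)⁻¹ * ∑ _n ∈ Finset.range N, (1 : ℂ)) atTop (𝓝 1) := by
  apply Tendsto.congr' _ tendsto_const_nhds
  filter_upwards [Filter.eventually_atTop.2 ⟨1, fun N hN => hN⟩] with N hN
  have : (N : ℂ) ≠ 0 := Nat.cast_ne_zero.2 (by omega)
  simp [Finset.sum_const, inv_mul_cancel₀ this]

/-- Lemma 2.7 of the paper: for `q ≥ 1`, complex numbers `c_1,…,c_{q+1}` and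
distinct reals `b_1,…,b_q ∈ (0, 2π)`, one has
`c_1·exp(i n b_1) + ⋯ + c_q·exp(i n b_q) → c_{q+1}` (as `n → ∞` over positive integers)
if and only if `c_1 = ⋯ = c_{q+1} = 0`. -/
theorem stmt_7 (q : ℕ) (hq : 0 < q) (c : Fin q → ℂ) (cq1 : ℂ)
    (b : Fin q → ℝ) (hb : ∀ k, b k ∈ Set.Ioo 0 (2 * Real.pi))
    (hbinj : Function.Injective b) :
    Filter.Tendsto
      (fun n : ℕ => ∑ k : Fin q, c k * Complex.exp (Complex.I * (n : ℂ) * ((b k : ℝ) : ℂ)))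
      Filter.atTop (nhds cq1) ↔ ((∀ k, c k = 0) ∧ cq1 = 0) := by
  constructor
  · intro h
    set z : Fin q → ℂ := fun k => Complex.exp (Complex.I * (b k : ℂ)) with hzdef
    have hexp : ∀ (n : ℕ) (k : Fin q),
        Complex.exp (Complex.I * (n : ℂ) * ((b k : ℝ) : ℂ)) = z k ^ n := by
      intro n k
      have : Complex.I * (n : ℂ) * ((b k : ℝ) : ℂ) = (n : ℂ) * (Complex.I * (b k : ℂ)) := by
        ring
      rw [this, Complex.exp_nat_mul]
    have hznorm : ∀ k, ‖z k‖ = 1 := by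
      intro k
      simp [hzdef, Complex.norm_exp]
    have hz0 : ∀ k, z k ≠ 0 := fun k => Complex.exp_ne_zero _
    have hzne1 : ∀ k, z k ≠ 1 := by
      intro k
      apply exp_I_ne_one (θ := b k)
      · have := (hb k).1; have := Real.pi_pos; linarith [(hb k).1]
      · exact (hb k).2
      · exact (hb k).1.ne'
    have hzinj : ∀ k l : Fin q, k ≠ l → z k ≠ z l := by
      intro k l hkl heq
      have hne : b k - b l ≠ 0 := sub_ne_zero.2 (fun hbe => hkl (hbinj hbe))
      have h1 : -(2 * Real.pi) < b k - b l := by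
        have := (hb k).1; have := (hb l).2; linarith
      have h2 : b k - b l < 2 * Real.pi := by
        have := (hb k).2; have := (hb l).1; linarith
      apply exp_I_ne_one h1 h2 hne
      have : Complex.I * ((b k - b l : ℝ) : ℂ) = Complex.I * (b k : ℂ) - Complex.I * (b l : ℂ) := by
        push_cast; ring
      rw [this, Complex.exp_sub]
      simp only [hzdef] at heq
      rw [heq, div_self (Complex.exp_ne_zero _)]
    -- rewrite hypothesis in terms of powers
    set f : ℕ → ℂ := fun n => ∑ k : Fin q, c k * z k ^ n with hfdef
    have hf : Tendsto f atTop (𝓝 cq1) := by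
      apply h.congr
      intro n
      apply Finset.sum_congr rfl
      intro k _
      rw [hexp n k]
    have hc : ∀ j, c j = 0 := by
      intro j
      -- average against (z j)⁻¹ ^ n
      have hwnorm : ‖(z j)⁻¹‖ = 1 := by rw [norm_inv, hznorm j]; norm_num
      have hwne1 : (z j)⁻¹ ≠ 1 := by
        rw [Ne, inv_eq_one]
        exact hzne1 j
      -- limit equals c j
      have h1 : Tendsto (fun N : ℕ => (N : ℂ)⁻¹ * ∑ n ∈ Finset.range N, f n * (z j)⁻¹ ^ n)
          atTop (𝓝 (c j)) := by
        have key : ∀ N : ℕ, (N : ℂ)⁻¹ * ∑ n ∈ Finset.range N, f n * (z j)⁻¹ ^ n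
            = ∑ k : Fin q, c k * ((N : ℂ)⁻¹ * ∑ n ∈ Finset.range N, (z k * (z j)⁻¹) ^ n) := by
          intro N
          simp only [hfdef, Finset.sum_mul, Finset.mul_sum, mul_pow]
          rw [Finset.sum_comm]
          apply Finset.sum_congr rfl
          intro k _
          apply Finset.sum_congr rfl
          intro n _
          ring
        have hsum : Tendsto
            (fun N : ℕ => ∑ k : Fin q, c k * ((N : ℂ)⁻¹ * ∑ n ∈ Finset.range N, (z k * (z j)⁻¹) ^ n))
            atTop (𝓝 (∑ k : Fin q, c k * (if k = j then 1 else 0))) := by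
          apply tendsto_finset_sum
          intro k _
          by_cases hkj : k = j
          · subst hkj
            simp only [if_pos rfl]
            have hzz : z k * (z k)⁻¹ = 1 := mul_inv_cancel₀ (hz0 k)
            simp only [hzz, one_pow]
            exact avg_one_tendsto_one.const_mul (c k)
          · simp only [if_neg hkj]
            have hne : z k * (z j)⁻¹ ≠ 1 := by
              rw [← div_eq_mul_inv, Ne, div_eq_one_iff_eq (hz0 j)]
              exact hzinj k j hkj
            have hnrm : ‖z k * (z j)⁻¹‖ = 1 := by
              rw [norm_mul, hznorm k, hwnorm]; norm_num
            simpa using (avg_pow_tendsto_zero hnrm hne).const_mul (c k)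
        have : (∑ k : Fin q, c k * (if k = j then 1 else 0)) = c j := by
          simp [mul_ite, mul_one, mul_zero]
        rw [this] at hsum
        exact hsum.congr (fun N => (key N).symm)
      -- limit equals 0
      have h2 : Tendsto (fun N : ℕ => (N : ℂ)⁻¹ * ∑ n ∈ Finset.range N, f n * (z j)⁻¹ ^ n)
          atTop (𝓝 0) := by
        have hnull : Tendsto (fun n => f n - cq1) atTop (𝓝 0) := by
          simpa using hf.sub (tendsto_const_nhds (x := cq1))
        have hwb : ∀ n : ℕ, ‖(z j)⁻¹ ^ n‖ ≤ 1 := by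
          intro n
          rw [norm_pow, hwnorm, one_pow]
        have ha := avg_null_tendsto_zero hnull hwb
        have hb2 : Tendsto
            (fun N : ℕ => cq1 * ((N : ℂ)⁻¹ * ∑ n ∈ Finset.range N, (z j)⁻¹ ^ n))
            atTop (𝓝 0) := by
          simpa using (avg_pow_tendsto_zero hwnorm hwne1).const_mul cq1
        have := ha.add hb2
        simp only [add_zero] at this
        apply this.congr
        intro N
        simp only [Finset.mul_sum]
        rw [← Finset.sum_add_distrib]
        apply Finset.sum_congr rfl
        intro n _
        ring
      exact tendsto_nhds_unique h1 h2
    refine ⟨hc, ?_⟩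
    have : Tendsto (fun _ : ℕ => (0 : ℂ)) atTop (𝓝 cq1) := by
      apply h.congr
      intro n
      symm
      simp [hc]
    exact tendsto_nhds_unique this tendsto_const_nhds
  · rintro ⟨hc, hcq⟩
    subst hcq
    have : (fun n : ℕ => ∑ k : Fin q,
        c k * Complex.exp (Complex.I * (n : ℂ) * ((b k : ℝ) : ℂ))) = fun _ => 0 := by
      funext n; simp [hc]
    rw [this]
    exact tendsto_const_nhds
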